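/- Let S be a finite quantum stop time and let V be an isometric p-adapted cocycle which is strongly continuous. Then the limit V_S = V_{S,∞} := lim_{t→∞} V_{S,t} exists in the strong operator topology on h ⊗ F. -/

import Mathlib

/- ------------------------------------------------------------------
Common framework: an abstract axiomatisation of Boson Fock space
`𝓕 = Γ(L²([0,∞); k))` over `H = L²([0,∞); k)`, quantum stop times,
stop-time integrals (as limits of Riemann sums over the net of finite
partitions of `[0, t] ⊆ [0, ∞]` ordered by refinement), the CCR flow,
and operator cocycles, following Belton–Sinha,
"Stopping the CCR flow and its isometric cocycles".
------------------------------------------------------------------ -/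

open Filter MeasureTheory Topology
open scoped ENNReal

noncomputable section

local notation "⟪" x ", " y "⟫" => @inner ℂ _ _ x y

/-- A finite partition `{0 = π₀ < π₁ < ⋯ < π_{n+1} = t}` of `[0, t] ⊆ [0, ∞]`,
encoded as a finite set of points of `[0, ∞]` containing `0` and `t` and
contained in `[0, t]`. -/
structure TPartition (t : ℝ≥0∞) where
  pts : Finset ℝ≥0∞
  zero_mem : 0 ∈ pts
  top_mem : t ∈ pts
  mem_le : ∀ s ∈ pts, s ≤ t

namespace TPartition

variable {t : ℝ≥0∞}

/-- Partitions are (pre)ordered by refinement: `π ≤ π'` iff `π'` refines `π`. -/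
instance : Preorder (TPartition t) where
  le π π' := π.pts ⊆ π'.pts
  le_refl _ := Finset.Subset.refl _
  le_trans _ _ _ h h' := Finset.Subset.trans h h'

/-- The predecessor of `s` in the partition `π`: the largest partition point
strictly less than `s` (and `0` if there is none). -/
def pred (π : TPartition t) (s : ℝ≥0∞) : ℝ≥0∞ :=
  (π.pts.filter fun u => u < s).sup id

end TPartition

variable {H 𝓕 : Type*}
  [NormedAddCommGroup H] [InnerProductSpace ℂ H] [CompleteSpace H]
  [NormedAddCommGroup 𝓕] [InnerProductSpace ℂ 𝓕] [CompleteSpace 𝓕]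

/-- An abstract presentation of Boson Fock space `𝓕 ≅ Γ(H)` over
`H = L²([0,∞); k)`, together with the structure maps needed here:
exponential vectors, truncation `f ↦ f·1_{[0,t)}`, the right shifts `θ_t`
and their adjoints, second quantisations `Γ_t` (with `Γ_∞` the projection
onto `ℂε(0)`, i.e. the second quantisation of `θ_∞ = 0`), and for each
`f ∈ H`, `s ∈ [0,∞]` the "past insertion" operator
`past f s = |ε(f1_{[0,s)})⟩⟨ε(0)| ⊗ I_{[s}` on `𝓕 ≅ 𝓕_{s)} ⊗ 𝓕_{[s}`, which
maps a future-adapted vector `ε(0|_{[0,s)}) ⊗ x` to `ε(f|_{[0,s)}) ⊗ x`. -/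
structure FockSpec (H 𝓕 : Type*) [NormedAddCommGroup H] [InnerProductSpace ℂ H]
    [CompleteSpace H] [NormedAddCommGroup 𝓕] [InnerProductSpace ℂ 𝓕] [CompleteSpace 𝓕] where
  /-- the exponential vectors -/
  eV : H → 𝓕
  inner_eV : ∀ f g : H, ⟪eV f, eV g⟫ = Complex.exp ⟪f, g⟫
  dense_eV : Dense (Submodule.span ℂ (Set.range eV) : Set 𝓕)
  /-- `cut t` is multiplication by the indicator of `[0, t)`, `f ↦ f|_{[0,t)}` -/
  cut : ℝ≥0∞ → H →L[ℂ] H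
  cut_zero : cut 0 = 0
  cut_top : cut ⊤ = ContinuousLinearMap.id ℂ H
  cut_sa : ∀ (t : ℝ≥0∞) (f g : H), ⟪cut t f, g⟫ = ⟪f, cut t g⟫
  cut_min : ∀ (s u : ℝ≥0∞) (f : H), cut s (cut u f) = cut (min s u) f
  /-- the isometric right shift `θ_t`, with `θ_∞ = 0` -/
  shift : ℝ≥0∞ → H →L[ℂ] H
  shift_top : shift ⊤ = 0
  shift_inner : ∀ t : ℝ≥0∞, t ≠ ⊤ → ∀ f g : H, ⟪shift t f, shift t g⟫ = ⟪f, g⟫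
  shift_add : ∀ (s u : ℝ≥0∞) (f : H), shift s (shift u f) = shift (s + u) f
  cut_shift : ∀ (t : ℝ≥0∞) (f : H), cut t (shift t f) = 0
  /-- `shiftL t = θ_t^*`, i.e. `f ↦ f(· + t)` -/
  shiftL : ℝ≥0∞ → H →L[ℂ] H
  shiftL_adj : ∀ (t : ℝ≥0∞) (f g : H), ⟪shift t f, g⟫ = ⟪f, shiftL t g⟫
  /-- the second quantisation `Γ_t : ε(f) ↦ ε(θ_t f)`;  `Γ_∞` is the orthogonal
  projection onto `ℂ ε(0)` -/
  Gam : ℝ≥0∞ → 𝓕 →L[ℂ] 𝓕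
  Gam_eV : ∀ (t : ℝ≥0∞) (f : H), Gam t (eV f) = eV (shift t f)
  /-- `GamL t = Γ_t^*` -/
  GamL : ℝ≥0∞ → 𝓕 →L[ℂ] 𝓕
  GamL_eV : ∀ t : ℝ≥0∞, t ≠ ⊤ → ∀ f : H, GamL t (eV f) = eV (shiftL t f)
  GamL_adj : ∀ (t : ℝ≥0∞) (x y : 𝓕), ⟪Gam t x, y⟫ = ⟪x, GamL t y⟫
  /-- past insertion: on `𝓕 ≅ 𝓕_{s)} ⊗ 𝓕_{[s}`,
  `past f s = |ε(f|_{[0,s)})⟩⟨ε(0|_{[0,s)})| ⊗ I_{[s}`; it maps `ε(0|_{[0,s)}) ⊗ x`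
  to `ε(f|_{[0,s)}) ⊗ x` -/
  past : H → ℝ≥0∞ → 𝓕 →L[ℂ] 𝓕
  past_eV : ∀ (f : H) (s : ℝ≥0∞) (g : H), past f s (eV g) = eV (cut s f + g - cut s g)
  /-- `projE t = E_t`, the second quantisation of `cut t`: the orthogonal projection
  onto `𝓕_{t)} ⊗ ε(0|_{[t,∞)})` -/
  projE : ℝ≥0∞ → 𝓕 →L[ℂ] 𝓕
  projE_eV : ∀ (t : ℝ≥0∞) (f : H), projE t (eV f) = eV (cut t f)

namespace FockSpec

variable (E : FockSpec H 𝓕)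

/-- `X ∈ B(𝓕_{t)}) ⊗ I_{[t}`, expressed through the factorisation of matrix
elements between exponential vectors. -/
def AdaptedAt (X : 𝓕 →L[ℂ] 𝓕) (t : ℝ≥0∞) : Prop :=
  ∀ f g : H, ⟪E.eV f, X (E.eV g)⟫ =
    ⟪E.eV (E.cut t f), X (E.eV (E.cut t g))⟫ * Complex.exp ⟪f - E.cut t f, g - E.cut t g⟫

/-- `F : [0, t] → 𝓕` is future adapted: `F(s) = ε(0|_{[0,s)}) ⊗ F_s ∈
ε(0|_{[0,s)}) ⊗ 𝓕_{[s}` for all `s ∈ (0, t]` (the value at `s = ∞`, when `t = ∞`,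
being fixed by the same requirement). -/
def FutureAdapted (t : ℝ≥0∞) (F : ℝ≥0∞ → 𝓕) : Prop :=
  ∀ s : ℝ≥0∞, 0 < s → s ≤ t → E.past 0 s (F s) = F s

end FockSpec

/-- `F` is bounded on `[0, t]`. -/
def BddOn {𝓕 : Type*} [NormedAddCommGroup 𝓕] (t : ℝ≥0∞) (F : ℝ≥0∞ → 𝓕) : Prop :=
  ∃ C : ℝ, ∀ s ≤ t, ‖F s‖ ≤ C

/-- A quantum stop time: a spectral measure on the Borel sets of `[0, ∞]`,
with values orthogonal projections on `𝓕`, which is identity adapted; we impose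
throughout (as in the paper) that `S({0}) = 0`. -/
structure QST (E : FockSpec H 𝓕) where
  meas : Set ℝ≥0∞ → 𝓕 →L[ℂ] 𝓕
  sa : ∀ A : Set ℝ≥0∞, IsSelfAdjoint (meas A)
  idem : ∀ A : Set ℝ≥0∞, meas A ∘L meas A = meas A
  /-- condition (ii): `A ↦ ⟨x, S(A) y⟩` is a complex measure -/
  cm : 𝓕 → 𝓕 → MeasureTheory.ComplexMeasure ℝ≥0∞
  cm_apply : ∀ (x y : 𝓕) (A : Set ℝ≥0∞), MeasurableSet A → cm x y A = ⟪x, meas A y⟫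
  total : meas Set.univ = 1
  adapted : ∀ t : ℝ≥0∞, t ≠ ⊤ → E.AdaptedAt (meas {s | s ≤ t}) t
  zero : meas {0} = 0

namespace QST

variable {E : FockSpec H 𝓕}

/-- A quantum stop time is finite when `S({∞}) = 0`. -/
def Finite (S : QST E) : Prop := S.meas {⊤} = 0

/-- The Riemann sum `Σ_{j=1}^{n+1} S((π_{j-1}, π_j]) v(π_j)` associated with a
partition `π` of `[0, t]` and an integrand `v`. -/
def sum (S : QST E) {t : ℝ≥0∞} (v : ℝ≥0∞ → 𝓕) (π : TPartition t) : 𝓕 :=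
  ∑ s ∈ π.pts.erase 0, S.meas (Set.Ioc (π.pred s) s) (v s)

end QST

variable {E : FockSpec H 𝓕}

/-- The integral of a complex function against a complex measure, via the Jordan
decompositions of its real and imaginary parts. -/
def cintegral (μ : MeasureTheory.ComplexMeasure ℝ≥0∞) (φ : ℝ≥0∞ → ℂ) : ℂ :=
  ((∫ s, φ s ∂(MeasureTheory.ComplexMeasure.re μ).toJordanDecomposition.posPart) -
      ∫ s, φ s ∂(MeasureTheory.ComplexMeasure.re μ).toJordanDecomposition.negPart) +
    Complex.I * ((∫ s, φ s ∂(MeasureTheory.ComplexMeasure.im μ).toJordanDecomposition.posPart) -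
      ∫ s, φ s ∂(MeasureTheory.ComplexMeasure.im μ).toJordanDecomposition.negPart)

/-- `∫_{[0,t]} φ(s) S^{f,g}(ds)`, where `S^{f,g}` is the finite Borel measure on
`[0, ∞]` with `S^{f,g}(A) = ∫_A exp(-∫_s^∞ ⟨f(r), g(r)⟩ dr) ⟨ε(f), S(ds) ε(g)⟩`;
here `∫_s^∞ ⟨f(r), g(r)⟩ dr = ⟪f - f|_{[0,s)}, g - g|_{[0,s)}⟫`. -/
def QST.sfgIntegral (S : QST E) (f g : H) (t : ℝ≥0∞) (φ : ℝ≥0∞ → ℂ) : ℂ :=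
  cintegral (S.cm (E.eV f) (E.eV g))
    (Set.indicator {s | s ≤ t}
      fun s => φ s * Complex.exp (-⟪f - E.cut s f, g - E.cut s g⟫))

/-- `ESt` is the family `(E_{S,t})_{t ∈ (0,∞]}` of time projections of `S`:
each `E_{S,t}` is an orthogonal projection and
`E_{S,t} ε(f) = ∫_{[0,t]} S(ds) ε(f|_{[0,s)}) ⊗ ε(0|_{[s,∞)})`. -/
def IsTimeProj (S : QST E) (ESt : ℝ≥0∞ → 𝓕 →L[ℂ] 𝓕) : Prop :=
  ∀ t : ℝ≥0∞, 0 < t →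
    IsSelfAdjoint (ESt t) ∧ ESt t ∘L ESt t = ESt t ∧
      ∀ f : H,
        Tendsto (fun π : TPartition t => S.sum (fun s => E.past f s (E.eV 0)) π) atTop
          (𝓝 (ESt t (E.eV f)))

/-- `ΓS` is the stopped right shift of `S`:
`Γ_S x = ∫_{[0,∞]} S(ds) ε(0|_{[0,s)}) ⊗ Γ_s x`. -/
def IsStoppedShift (S : QST E) (ΓS : 𝓕 →L[ℂ] 𝓕) : Prop :=
  ∀ x : 𝓕, Tendsto (fun π : TPartition ⊤ => S.sum (fun s => E.Gam s x) π) atTop (𝓝 (ΓS x))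

/-- `j` encodes the isometric isomorphism `j_S : 𝓕_{S)} ⊗ 𝓕_{[S} → 𝓕` of the
abstract strong Markov property, as a bilinear map on `𝓕 × 𝓕` (precomposed with
`E_S = E_{S,∞}` and `Γ_S` in the two arguments): it satisfies
`j_S(E_{S,t} ε(f) ⊗ Γ_S x) = ∫_{[0,t]} S(ds) ε(f|_{[0,s)}) ⊗ Γ_s x`, is isometric
for the tensor inner product, and has dense (hence, being isometric, full) range. -/
def IsJS (S : QST E) (ESt : ℝ≥0∞ → 𝓕 →L[ℂ] 𝓕) (ΓS : 𝓕 →L[ℂ] 𝓕)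
    (j : 𝓕 →ₗ[ℂ] 𝓕 →ₗ[ℂ] 𝓕) : Prop :=
  (∀ t : ℝ≥0∞, 0 < t → ∀ (f : H) (x : 𝓕),
      Tendsto (fun π : TPartition t => S.sum (fun s => E.past f s (E.Gam s x)) π) atTop
        (𝓝 (j (ESt t (E.eV f)) (ΓS x)))) ∧
    (∀ a b x y : 𝓕,
      ⟪j (ESt ⊤ a) (ΓS x), j (ESt ⊤ b) (ΓS y)⟫ = ⟪ESt ⊤ a, ESt ⊤ b⟫ * ⟪ΓS x, ΓS y⟫) ∧
    Dense (Submodule.span ℂ {z : 𝓕 | ∃ a x : 𝓕, z = j (ESt ⊤ a) (ΓS x)} : Set 𝓕)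

/-- A spectral measure on the Borel sets of `[0, ∞]²`. -/
def IsSpectralProd (P : Set (ℝ≥0∞ × ℝ≥0∞) → 𝓕 →L[ℂ] 𝓕) : Prop :=
  (∀ A, IsSelfAdjoint (P A)) ∧ (∀ A, P A ∘L P A = P A) ∧ P Set.univ = 1 ∧
    ∀ A : ℕ → Set (ℝ≥0∞ × ℝ≥0∞), (∀ n, MeasurableSet (A n)) →
      Pairwise (Function.onFun Disjoint A) → ∀ x y : 𝓕,
        HasSum (fun n => ⟪x, P (A n) y⟫) ⟪x, P (⋃ n, A n) y⟫

/-- `P` is the product spectral measure `S ⊗ T` on `[0, ∞]²`, determined on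
rectangles by `(S ⊗ T)(A × B) = j_S (S(A) ⊗ Γ_S T(B) Γ_S^*) j_S^*`. -/
def IsProdOf (S T : QST E) (ESt : ℝ≥0∞ → 𝓕 →L[ℂ] 𝓕) (ΓS : 𝓕 →L[ℂ] 𝓕)
    (jS : 𝓕 →ₗ[ℂ] 𝓕 →ₗ[ℂ] 𝓕) (P : Set (ℝ≥0∞ × ℝ≥0∞) → 𝓕 →L[ℂ] 𝓕) : Prop :=
  IsSpectralProd P ∧
    ∀ A B : Set ℝ≥0∞, MeasurableSet A → MeasurableSet B → ∀ a y : 𝓕,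
      P (A ×ˢ B) (jS (ESt ⊤ a) (ΓS y)) = jS (S.meas A (ESt ⊤ a)) (ΓS (T.meas B y))

/-- `ST` is the convolution `S ⋆ T`:
`(S ⋆ T)(C) = (S ⊗ T)({(s, u) : s + u ∈ C})`. -/
def IsConvOf (S T : QST E) (ESt : ℝ≥0∞ → 𝓕 →L[ℂ] 𝓕) (ΓS : 𝓕 →L[ℂ] 𝓕)
    (jS : 𝓕 →ₗ[ℂ] 𝓕 →ₗ[ℂ] 𝓕) (ST : QST E) : Prop :=
  ∃ P : Set (ℝ≥0∞ × ℝ≥0∞) → 𝓕 →L[ℂ] 𝓕, IsProdOf S T ESt ΓS jS P ∧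
    ∀ C : Set ℝ≥0∞, MeasurableSet C → ST.meas C = P {p | p.1 + p.2 ∈ C}

/-- A Borel measurable, bounded, future-adapted integrand on `[0, t]`. -/
def MeasIntegrand [MeasurableSpace 𝓕] (E : FockSpec H 𝓕) (t : ℝ≥0∞)
    (F : ℝ≥0∞ → 𝓕) : Prop :=
  Measurable F ∧ BddOn t F ∧ E.FutureAdapted t F

/-- `Int` is a stop-time integral for `S`: `Int t f F` plays the role of
`∫_{[0,t]} S(ds) ε(f|_{[0,s)}) ⊗ F_s` for Borel measurable, bounded,
future-adapted `F`, satisfying the inner-product and projection identities and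
extending the Riemann-sum limit for continuous integrands. -/
def IsStopIntegral [MeasurableSpace 𝓕] (E : FockSpec H 𝓕) (S : QST E)
    (Int : ℝ≥0∞ → H → (ℝ≥0∞ → 𝓕) → 𝓕) : Prop :=
  (∀ (t : ℝ≥0∞) (f g : H) (F G : ℝ≥0∞ → 𝓕), MeasIntegrand E t F → MeasIntegrand E t G →
      ⟪Int t f F, Int t g G⟫ = S.sfgIntegral f g t fun s => ⟪F s, G s⟫) ∧
    (∀ (t : ℝ≥0∞) (f : H) (F : ℝ≥0∞ → 𝓕), MeasIntegrand E t F → ∀ r : ℝ≥0∞, 0 < r →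
      S.meas {s | s ≤ r} (Int t f F) = Int (min r t) f F) ∧
    (∀ (t : ℝ≥0∞) (f : H) (F : ℝ≥0∞ → 𝓕), MeasIntegrand E t F →
      ContinuousOn F {s | s ≤ t} →
        Tendsto (fun π : TPartition t => S.sum (fun s => E.past f s (F s)) π) atTop
          (𝓝 (Int t f F)))

/-- `σ` is the CCR flow: `σ_t(X) = I_{t)} ⊗ Γ_t X Γ_t^*` for `t ∈ [0, ∞)`
(expressed through matrix elements between exponential vectors), and `σ_∞ ≡ I`. -/
def IsCCRFlow (E : FockSpec H 𝓕) (σ : ℝ≥0∞ → (𝓕 →L[ℂ] 𝓕) → 𝓕 →L[ℂ] 𝓕) : Prop :=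
  (∀ s : ℝ≥0∞, s ≠ ⊤ → ∀ (X : 𝓕 →L[ℂ] 𝓕) (f g : H),
      ⟪E.eV f, σ s X (E.eV g)⟫ =
        Complex.exp ⟪E.cut s f, E.cut s g⟫ *
          ⟪E.eV (E.shiftL s f), X (E.eV (E.shiftL s g))⟫) ∧
    ∀ X : 𝓕 →L[ℂ] 𝓕, σ ⊤ X = 1

/-- The Riemann sum `σ_{S,π}(X) = Σ_{j=1}^{n+1} σ_{π_j}(X) S((π_{j-1}, π_j])`. -/
def QST.flowSum (S : QST E) (σ : ℝ≥0∞ → (𝓕 →L[ℂ] 𝓕) → 𝓕 →L[ℂ] 𝓕)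
    (X : 𝓕 →L[ℂ] 𝓕) (π : TPartition (⊤ : ℝ≥0∞)) : 𝓕 →L[ℂ] 𝓕 :=
  ∑ s ∈ π.pts.erase 0, σ s X ∘L S.meas (Set.Ioc (π.pred s) s)

/-- `σS` is the stopped CCR flow `σ_S`: for every `X`, `σ_S(X)` is the limit of
`σ_{S,π}(X)` in the strong operator topology as `π` is refined. -/
def IsStoppedFlow (S : QST E) (σ : ℝ≥0∞ → (𝓕 →L[ℂ] 𝓕) → 𝓕 →L[ℂ] 𝓕)
    (σS : (𝓕 →L[ℂ] 𝓕) → 𝓕 →L[ℂ] 𝓕) : Prop :=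
  ∀ (X : 𝓕 →L[ℂ] 𝓕) (x : 𝓕),
    Tendsto (fun π : TPartition ⊤ => S.flowSum σ X π x) atTop (𝓝 (σS X x))

variable {h 𝓚 : Type*}
  [NormedAddCommGroup h] [InnerProductSpace ℂ h] [CompleteSpace h]
  [NormedAddCommGroup 𝓚] [InnerProductSpace ℂ 𝓚] [CompleteSpace 𝓚]

/-- An abstract presentation of the Hilbert-space tensor product `𝓚 = h ⊗ 𝓕` of
the initial space `h` and Fock space `𝓕`, with the ampliations
`X ↦ I_h ⊗ X` of `B(𝓕)` and `B ↦ B ⊗ I_𝓕` of `B(h)`. -/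
structure AmpSpec (𝓕 h 𝓚 : Type*) [NormedAddCommGroup 𝓕] [InnerProductSpace ℂ 𝓕]
    [CompleteSpace 𝓕] [NormedAddCommGroup h] [InnerProductSpace ℂ h] [CompleteSpace h]
    [NormedAddCommGroup 𝓚] [InnerProductSpace ℂ 𝓚] [CompleteSpace 𝓚] where
  tens : h →ₗ[ℂ] 𝓕 →ₗ[ℂ] 𝓚
  inner_tens : ∀ (u v : h) (x y : 𝓕), ⟪tens u x, tens v y⟫ = ⟪u, v⟫ * ⟪x, y⟫
  dense_tens : Dense (Submodule.span ℂ {z : 𝓚 | ∃ u x, z = tens u x} : Set 𝓚)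
  amp : (𝓕 →L[ℂ] 𝓕) → 𝓚 →L[ℂ] 𝓚
  amp_tens : ∀ (X : 𝓕 →L[ℂ] 𝓕) (u : h) (x : 𝓕), amp X (tens u x) = tens u (X x)
  ampH : (h →L[ℂ] h) → 𝓚 →L[ℂ] 𝓚
  ampH_tens : ∀ (B : h →L[ℂ] h) (u : h) (x : 𝓕), ampH B (tens u x) = tens (B u) x

/-- `X ∈ M ⊗̄ B(𝓕)` for the von Neumann algebra `M ⊆ B(h)`: `X` commutes with
`B ⊗ I_𝓕` for every `B` in the commutant of `M`. -/
def InVNTensor (A : AmpSpec 𝓕 h 𝓚) (M : Set (h →L[ℂ] h)) (X : 𝓚 →L[ℂ] 𝓚) : Prop :=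
  ∀ B : h →L[ℂ] h, (∀ Y ∈ M, B ∘L Y = Y ∘L B) → X ∘L A.ampH B = A.ampH B ∘L X

/-- `V` is a `p`-adapted process: `V_t = V_{t)} ⊗ P_{[t}`, where `P_{[t}` is the
second quantisation of the pointwise action `pH` of the projection `p` on
`L²([t,∞); k)`; expressed through matrix elements between exponential vectors. -/
def PAdapted (E : FockSpec H 𝓕) (A : AmpSpec 𝓕 h 𝓚) (pH : H →L[ℂ] H)
    (V : ℝ≥0∞ → 𝓚 →L[ℂ] 𝓚) : Prop :=
  ∀ t : ℝ≥0∞, t ≠ ⊤ → ∀ (u v : h) (f g : H),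
    ⟪A.tens u (E.eV f), V t (A.tens v (E.eV g))⟫ =
      ⟪A.tens u (E.eV (E.cut t f)), V t (A.tens v (E.eV (E.cut t g)))⟫ *
        Complex.exp ⟪f - E.cut t f, pH (g - E.cut t g)⟫

/-- `Vhat` is the identity-adapted projection `V̂` of the `p`-adapted process `V`:
`V̂_t = V_{t)} ⊗ I_{[t}`. -/
def IsHatOf (E : FockSpec H 𝓕) (A : AmpSpec 𝓕 h 𝓚)
    (V Vhat : ℝ≥0∞ → 𝓚 →L[ℂ] 𝓚) : Prop :=
  ∀ t : ℝ≥0∞, t ≠ ⊤ → ∀ (u v : h) (f g : H),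
    ⟪A.tens u (E.eV f), Vhat t (A.tens v (E.eV g))⟫ =
      ⟪A.tens u (E.eV (E.cut t f)), V t (A.tens v (E.eV (E.cut t g)))⟫ *
        Complex.exp ⟪f - E.cut t f, g - E.cut t g⟫

/-- The process is isometric: `V_{t)}^* V_{t)} = I`, i.e. `V̂_t` is isometric. -/
def IsometricHat (Vhat : ℝ≥0∞ → 𝓚 →L[ℂ] 𝓚) : Prop :=
  ∀ t : ℝ≥0∞, t ≠ ⊤ → ∀ z : 𝓚, ‖Vhat t z‖ = ‖z‖

/-- `Sig` is the CCR flow extended by ampliation to `B(h ⊗ 𝓕)`. -/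
def IsAmpCCRFlow (E : FockSpec H 𝓕) (A : AmpSpec 𝓕 h 𝓚)
    (Sig : ℝ≥0∞ → (𝓚 →L[ℂ] 𝓚) → 𝓚 →L[ℂ] 𝓚) : Prop :=
  ∀ s : ℝ≥0∞, s ≠ ⊤ → ∀ (X : 𝓚 →L[ℂ] 𝓚) (u v : h) (f g : H),
    ⟪A.tens u (E.eV f), Sig s X (A.tens v (E.eV g))⟫ =
      Complex.exp ⟪E.cut s f, E.cut s g⟫ *
        ⟪A.tens u (E.eV (E.shiftL s f)), X (A.tens v (E.eV (E.shiftL s g)))⟫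

/-- The (left operator Markovian) cocycle identity `V_{s+t} = V̂_s σ_s(V_t)`. -/
def IsLeftCocycle (Sig : ℝ≥0∞ → (𝓚 →L[ℂ] 𝓚) → 𝓚 →L[ℂ] 𝓚)
    (V Vhat : ℝ≥0∞ → 𝓚 →L[ℂ] 𝓚) : Prop :=
  ∀ s t : ℝ≥0∞, s ≠ ⊤ → t ≠ ⊤ → V (s + t) = Vhat s ∘L Sig s (V t)

/-- Strong continuity of the process on `[0, ∞)`. -/
def StrongContOn (V : ℝ≥0∞ → 𝓚 →L[ℂ] 𝓚) : Prop :=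
  ∀ z : 𝓚, ContinuousOn (fun t => V t z) {t : ℝ≥0∞ | t ≠ ⊤}

/-- The Riemann sum `V_{S,π} = Σ_{j=1}^{n+1} V_{π_j} S((π_{j-1}, π_j])`, with the
stop time `S` extended by ampliation to `h ⊗ 𝓕`. -/
def VSum {E : FockSpec H 𝓕} (A : AmpSpec 𝓕 h 𝓚) (S : QST E) {t : ℝ≥0∞}
    (V : ℝ≥0∞ → 𝓚 →L[ℂ] 𝓚) (π : TPartition t) : 𝓚 →L[ℂ] 𝓚 :=
  ∑ s ∈ π.pts.erase 0, V s ∘L A.amp (S.meas (Set.Ioc (π.pred s) s))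

/-! For finite `t`, `V_{S,t}` is a contraction: the terms `V_{π_j} S((π_{j-1}, π_j])` of a
Riemann sum have mutually orthogonal ranges, because `V_{π_j} = V̂_{π_j} (I ⊗ I_{π_j)} ⊗ P_{[π_j})`,
the cocycle identity writes a later `V_{π_k}` as `V̂_{π_j} σ_{π_j}(V_{π_k - π_j})`, and the adapted
projection `S((π_{j-1}, π_j])` commutes with both `I ⊗ I_{π_j)} ⊗ P_{[π_j}` and
`σ_{π_j}(V_{π_k - π_j})`. Refining partitions through `u ≤ u'` gives
`V_{S,u'} = V_{S,u} + V_{S,u'} S((u, u'])`, so `‖V_{S,u'} z - V_{S,u} z‖ ≤ ‖S((u, ∞]) z‖`, which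
tends to `0` because `S` is finite. Hence `V_{S,u} z` converges as `u → ∞`, and Banach–Steinhaus
makes the pointwise limit a bounded operator. -/

open scoped InnerProduct

section InnerProductSpace

variable {F : Type*} [NormedAddCommGroup F] [InnerProductSpace ℂ F]

theorem eq_of_inner_eq_of_dense_span {s : Set F} (hs : Dense (Submodule.span ℂ s : Set F))
    {x y : F} (h : ∀ v ∈ s, ⟪v, x⟫ = ⟪v, y⟫) : x = y :=
  hs.eq_of_inner_right ℂ fun v hv => by
    induction hv using Submodule.span_induction with
    | mem v hv => exact h v hv
    | zero => simp
    | add _ _ _ _ h₁ h₂ => simp [inner_add_left, h₁, h₂]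
    | smul c _ _ h₁ => simp [inner_smul_left, h₁]

theorem norm_sum_sq_eq_sum_norm_sq {ι : Type*} (J : Finset ι) (a : ι → F)
    (h : ∀ i ∈ J, ∀ j ∈ J, i ≠ j → ⟪a i, a j⟫ = 0) :
    ‖∑ i ∈ J, a i‖ ^ 2 = ∑ i ∈ J, ‖a i‖ ^ 2 := by
  have hdiag : ⟪∑ i ∈ J, a i, ∑ j ∈ J, a j⟫ = ∑ i ∈ J, ⟪a i, a i⟫ := by
    rw [sum_inner]
    refine Finset.sum_congr rfl fun i hi => ?_
    rw [inner_sum]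
    exact Finset.sum_eq_single_of_mem i hi fun j hj hji => h i hi j hj hji.symm
  rw [← inner_self_eq_norm_sq (𝕜 := ℂ), hdiag, map_sum]
  simp only [inner_self_eq_norm_sq (𝕜 := ℂ)]

theorem tendsto_apply_zero_of_dense_span {ι : Type*} {l : Filter ι} (P : ι → F →L[ℂ] F)
    (hP : ∀ i, ‖P i‖ ≤ 1) {s : Set F} (hs : Dense (Submodule.span ℂ s : Set F))
    (h : ∀ x ∈ s, Tendsto (fun i => P i x) l (𝓝 0)) (z : F) :
    Tendsto (fun i => P i z) l (𝓝 0) := by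
  let K : Submodule ℂ F :=
    { carrier := {x | Tendsto (fun i => P i x) l (𝓝 0)}
      add_mem' := fun hx hy => by simpa using hx.add hy
      zero_mem' := by simpa using tendsto_const_nhds
      smul_mem' := fun c x hx => by simpa using hx.const_smul c }
  have hK : IsClosed (K : Set F) := by
    have hequi := (LipschitzWith.uniformEquicontinuous (fun i => ⇑(P i)) 1 fun i =>
      (P i).lipschitzWith_of_opNorm_le (by simpa using hP i)).equicontinuous
    exact hequi.isClosed_setOfPred_tendsto (f := fun _ => (0 : F)) continuous_const
  have hspan : Submodule.span ℂ s ≤ K := Submodule.span_le.mpr h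
  exact hK.closure_subset_iff.mpr hspan (hs z)

variable [CompleteSpace F]

theorem IsSelfAdjoint.inner_apply_left {P : F →L[ℂ] F} (hP : IsSelfAdjoint P) (x y : F) :
    ⟪P x, y⟫ = ⟪x, P y⟫ :=
  hP.isSymmetric x y

theorem IsStarProjection.norm_apply_sq {P : F →L[ℂ] F} (hP : IsStarProjection P) (z : F) :
    ‖P z‖ ^ 2 = RCLike.re ⟪P z, z⟫ := by
  rw [← inner_self_eq_norm_sq (𝕜 := ℂ), ← hP.isSelfAdjoint.inner_apply_left (P z) z,
    ← mul_apply_eq_comp, hP.isIdempotentElem.eq]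

theorem IsStarProjection.norm_apply_le {P : F →L[ℂ] F} (hP : IsStarProjection P) (z : F) :
    ‖P z‖ ≤ ‖z‖ :=
  (P.le_opNorm z).trans (mul_le_of_le_one_left (norm_nonneg z) (hP.norm_le P))

theorem sum_norm_apply_sq_le {ι : Type*} (J : Finset ι) (P : ι → F →L[ℂ] F)
    (hP : ∀ i ∈ J, IsStarProjection (P i)) (horth : ∀ i ∈ J, ∀ j ∈ J, i ≠ j → P i * P j = 0)
    (z : F) : ∑ i ∈ J, ‖P i z‖ ^ 2 ≤ ‖z‖ ^ 2 := by
  set w := ∑ i ∈ J, P i z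
  have hw : ‖w‖ ^ 2 = ∑ i ∈ J, ‖P i z‖ ^ 2 := by
    refine norm_sum_sq_eq_sum_norm_sq J _ fun i hi j hj hij => ?_
    rw [(hP i hi).isSelfAdjoint.inner_apply_left, ← mul_apply_eq_comp, horth i hi j hj hij,
      zero_apply, inner_zero_right]
  have hwz : ∑ i ∈ J, ‖P i z‖ ^ 2 = RCLike.re ⟪w, z⟫ := by
    simp only [w, sum_inner, map_sum]
    exact Finset.sum_congr rfl fun i hi => (hP i hi).norm_apply_sq z
  have hle : ‖w‖ ^ 2 ≤ ‖w‖ * ‖z‖ := by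
    rw [hw, hwz]
    exact (RCLike.re_le_norm _).trans (norm_inner_le_norm w z)
  rw [← hw]
  have : ‖w‖ ≤ ‖z‖ := by nlinarith [norm_nonneg w, norm_nonneg z]
  exact pow_le_pow_left₀ (norm_nonneg w) this 2

end InnerProductSpace

namespace QST

variable (S : QST E) {A B : Set ℝ≥0∞}

theorem isStarProjection_meas (A : Set ℝ≥0∞) : IsStarProjection (S.meas A) :=
  ⟨S.idem A, S.sa A⟩

theorem meas_union (hAB : Disjoint A B) (hA : MeasurableSet A) (hB : MeasurableSet B) :
    S.meas (A ∪ B) = S.meas A + S.meas B := by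
  ext y
  refine ext_inner_left ℂ fun x => ?_
  rw [← S.cm_apply x y _ (hA.union hB), VectorMeasure.of_union hAB hA hB,
    S.cm_apply _ _ _ hA, S.cm_apply _ _ _ hB, add_apply, inner_add_right]

theorem meas_mul_meas_of_disjoint (hAB : Disjoint A B) (hA : MeasurableSet A)
    (hB : MeasurableSet B) : S.meas A * S.meas B = 0 := by
  have hanti : S.meas A * S.meas B + S.meas B * S.meas A = 0 :=
    ((S.isStarProjection_meas A).isIdempotentElem.add_iff
      (S.isStarProjection_meas B).isIdempotentElem).mp
      (S.meas_union hAB hA hB ▸ (S.isStarProjection_meas _).isIdempotentElem)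
  have := IsAddTorsionFree.of_isTorsionFree ℂ (𝓕 →L[ℂ] 𝓕)
  exact (S.isStarProjection_meas A).isIdempotentElem.mul_eq_zero_of_anticommute hanti

theorem meas_mul_meas (hA : MeasurableSet A) (hB : MeasurableSet B) :
    S.meas A * S.meas B = S.meas (A ∩ B) := by
  have hAB : MeasurableSet (A ∩ B) := hA.inter hB
  have hA' : S.meas A = S.meas (A ∩ B) + S.meas (A \ B) := by
    rw [← S.meas_union (Set.disjoint_sdiff_right.mono_left Set.inter_subset_right) hAB
      (hA.diff hB), Set.inter_union_sdiff]
  have hB' : S.meas B = S.meas (A ∩ B) + S.meas (B \ A) := by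
    rw [← S.meas_union (Set.disjoint_sdiff_right.mono_left Set.inter_subset_left) hAB
      (hB.diff hA), Set.inter_comm, Set.inter_union_sdiff]
  rw [hA', hB', add_mul, mul_add, mul_add, (S.isStarProjection_meas _).isIdempotentElem.eq,
    S.meas_mul_meas_of_disjoint (Set.disjoint_sdiff_right.mono_left Set.inter_subset_left) hAB
      (hB.diff hA),
    S.meas_mul_meas_of_disjoint (Set.disjoint_sdiff_right.mono_left Set.inter_subset_right).symm
      (hA.diff hB) hAB,
    S.meas_mul_meas_of_disjoint disjoint_sdiff_sdiff (hA.diff hB) (hB.diff hA)]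
  simp

end QST

namespace AmpSpec

variable (A : AmpSpec 𝓕 h 𝓚)

theorem norm_tens (u : h) (x : 𝓕) : ‖A.tens u x‖ = ‖u‖ * ‖x‖ := by
  have hsq : ‖A.tens u x‖ ^ 2 = (‖u‖ * ‖x‖) ^ 2 := by
    have := A.inner_tens u u x x
    rw [inner_self_eq_norm_sq_to_K, inner_self_eq_norm_sq_to_K, inner_self_eq_norm_sq_to_K]
      at this
    exact Complex.ofReal_injective (by push_cast; rw [mul_pow]; exact this)
  exact (pow_left_inj₀ (norm_nonneg _) (by positivity) two_ne_zero).mp hsq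

theorem ext_tens {T₁ T₂ : 𝓚 →L[ℂ] 𝓚} (hT : ∀ u x, T₁ (A.tens u x) = T₂ (A.tens u x)) :
    T₁ = T₂ :=
  ContinuousLinearMap.ext_on A.dense_tens fun _ ⟨u, x, hz⟩ => hz ▸ hT u x

theorem ext_inner_tens {w₁ w₂ : 𝓚} (hw : ∀ u x, ⟪A.tens u x, w₁⟫ = ⟪A.tens u x, w₂⟫) :
    w₁ = w₂ :=
  eq_of_inner_eq_of_dense_span A.dense_tens fun _ ⟨u, x, hz⟩ => hz ▸ hw u x

theorem amp_mul (X Y : 𝓕 →L[ℂ] 𝓕) : A.amp (X * Y) = A.amp X * A.amp Y :=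
  A.ext_tens fun u x => by simp only [mul_apply_eq_comp, A.amp_tens]

theorem adjoint_amp (X : 𝓕 →L[ℂ] 𝓕) : (A.amp X)† = A.amp (X†) :=
  A.ext_tens fun v y => A.ext_inner_tens fun u x => by
    rw [ContinuousLinearMap.adjoint_inner_right, A.amp_tens, A.amp_tens, A.inner_tens,
      A.inner_tens, ContinuousLinearMap.adjoint_inner_right]

theorem amp_zero : A.amp 0 = 0 :=
  A.ext_tens fun u x => by rw [A.amp_tens, zero_apply, map_zero, zero_apply]

theorem isSelfAdjoint_amp {X : 𝓕 →L[ℂ] 𝓕} (hX : IsSelfAdjoint X) : IsSelfAdjoint (A.amp X) := by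
  rw [ContinuousLinearMap.isSelfAdjoint_iff', adjoint_amp, hX.adjoint_eq]

theorem isStarProjection_amp {X : 𝓕 →L[ℂ] 𝓕} (hX : IsStarProjection X) :
    IsStarProjection (A.amp X) where
  isIdempotentElem := by rw [IsIdempotentElem, ← amp_mul, hX.isIdempotentElem.eq]
  isSelfAdjoint := A.isSelfAdjoint_amp hX.isSelfAdjoint

theorem dense_span_tens_eV (E : FockSpec H 𝓕) :
    Dense (Submodule.span ℂ {z | ∃ u f, z = A.tens u (E.eV f)} : Set 𝓚) := by
  set D := {z | ∃ u f, z = A.tens u (E.eV f)}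
  set K := (Submodule.span ℂ D).topologicalClosure
  have hK : IsClosed (K : Set 𝓚) := Submodule.isClosed_topologicalClosure _
  have htens : ∀ u x, A.tens u x ∈ K := by
    intro u x
    let T : 𝓕 →L[ℂ] 𝓚 := (A.tens u).mkContinuous ‖u‖ fun x => (A.norm_tens u x).le
    have hspan : (Submodule.span ℂ (Set.range E.eV)).map (T : 𝓕 →ₗ[ℂ] 𝓚) ≤
        Submodule.span ℂ D := by
      rw [Submodule.map_span]
      exact Submodule.span_mono (by rintro _ ⟨_, ⟨f, rfl⟩, rfl⟩; exact ⟨u, f, rfl⟩)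
    have hmaps : Set.MapsTo T (Submodule.span ℂ (Set.range E.eV)) K := fun y hy =>
      (Submodule.span ℂ D).le_topologicalClosure (hspan ⟨y, hy, rfl⟩)
    have hx := map_mem_closure T.continuous (E.dense_eV x) hmaps
    rwa [hK.closure_eq] at hx
  have hle : Submodule.span ℂ {z | ∃ u x, z = A.tens u x} ≤ K :=
    Submodule.span_le.mpr fun _ ⟨u, x, hz⟩ => hz ▸ htens u x
  intro z
  rw [← Submodule.topologicalClosure_coe]
  exact hK.closure_subset_iff.mpr hle (A.dense_tens z)

theorem ext_inner_tens_eV (E : FockSpec H 𝓕) {w₁ w₂ : 𝓚}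
    (hw : ∀ u f, ⟪A.tens u (E.eV f), w₁⟫ = ⟪A.tens u (E.eV f), w₂⟫) : w₁ = w₂ :=
  eq_of_inner_eq_of_dense_span (A.dense_span_tens_eV E) fun _ ⟨u, f, hz⟩ => hz ▸ hw u f

theorem ext_tens_eV (E : FockSpec H 𝓕) {T₁ T₂ : 𝓚 →L[ℂ] 𝓚}
    (hT : ∀ v g, T₁ (A.tens v (E.eV g)) = T₂ (A.tens v (E.eV g))) : T₁ = T₂ :=
  ContinuousLinearMap.ext_on (A.dense_span_tens_eV E) fun _ ⟨v, g, hz⟩ => hz ▸ hT v g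

theorem ext_inner_tens_eV_apply (E : FockSpec H 𝓕) {T₁ T₂ : 𝓚 →L[ℂ] 𝓚}
    (hT : ∀ u f v g, ⟪A.tens u (E.eV f), T₁ (A.tens v (E.eV g))⟫ =
      ⟪A.tens u (E.eV f), T₂ (A.tens v (E.eV g))⟫) : T₁ = T₂ :=
  A.ext_tens_eV E fun v g => A.ext_inner_tens_eV E fun u f => hT u f v g

end AmpSpec

namespace FockSpec

theorem ext_inner_eV {x y : 𝓕} (h : ∀ k, ⟪E.eV k, x⟫ = ⟪E.eV k, y⟫) : x = y :=
  eq_of_inner_eq_of_dense_span E.dense_eV fun _ ⟨k, hk⟩ => hk ▸ h k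

theorem isStarProjection_cut (t : ℝ≥0∞) : IsStarProjection (E.cut t) where
  isIdempotentElem := by
    ext f
    exact (E.cut_min t t f).trans (by rw [min_self])
  isSelfAdjoint := ContinuousLinearMap.isSelfAdjoint_iff_isSymmetric.mpr (E.cut_sa t)

theorem cut_cut_of_le {s t : ℝ≥0∞} (hst : s ≤ t) (f : H) : E.cut t (E.cut s f) = E.cut s f := by
  rw [E.cut_min, min_eq_right hst]

theorem cut_sub_cut (t : ℝ≥0∞) (f : H) : E.cut t (f - E.cut t f) = 0 := by
  rw [map_sub, E.cut_cut_of_le le_rfl, sub_self]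

theorem inner_cut_sub_cut (t : ℝ≥0∞) (f g : H) : ⟪E.cut t f, g - E.cut t g⟫ = 0 := by
  rw [E.cut_sa, cut_sub_cut, inner_zero_right]

theorem inner_eq_inner_cut_add (t : ℝ≥0∞) (f g : H) :
    ⟪f, g⟫ = ⟪E.cut t f, E.cut t g⟫ + ⟪f - E.cut t f, g - E.cut t g⟫ := by
  have hcross : ⟪f - E.cut t f, E.cut t g⟫ = 0 := by
    rw [← inner_conj_symm, inner_cut_sub_cut, map_zero]
  conv_lhs => rw [← add_sub_cancel (E.cut t f) f, ← add_sub_cancel (E.cut t g) g]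
  rw [inner_add_left, inner_add_right, inner_add_right, inner_cut_sub_cut, hcross]
  ring

theorem shiftL_cut (a : ℝ≥0∞) (g : H) : E.shiftL a (E.cut a g) = 0 :=
  ext_inner_left ℂ fun v => by
    rw [← E.shiftL_adj, ← E.cut_sa, E.cut_shift, inner_zero_left, inner_zero_right]

theorem adaptedAt_one (a : ℝ≥0∞) : E.AdaptedAt 1 a := fun f g => by
  simp only [one_apply_eq_self, E.inner_eV, ← Complex.exp_add,
    ← E.inner_eq_inner_cut_add]

theorem AdaptedAt.mono {X : 𝓕 →L[ℂ] 𝓕} {d a : ℝ≥0∞} (hX : E.AdaptedAt X d) (hda : d ≤ a) :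
    E.AdaptedAt X a := fun f g => by
  have hsplit := E.inner_eq_inner_cut_add a (f - E.cut d f) (g - E.cut d g)
  simp only [map_sub, E.cut_cut_of_le hda, sub_sub_sub_cancel_right] at hsplit
  rw [hX f g, hX (E.cut a f) (E.cut a g), E.cut_min d a, E.cut_min d a, min_eq_left hda,
    hsplit, Complex.exp_add]
  ring

theorem AdaptedAt.sub {X Y : 𝓕 →L[ℂ] 𝓕} {a : ℝ≥0∞} (hX : E.AdaptedAt X a)
    (hY : E.AdaptedAt Y a) : E.AdaptedAt (X - Y) a := fun f g => by
  simp only [sub_apply, inner_sub_right, hX f g, hY f g]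
  ring

theorem past_Gam_eV (a : ℝ≥0∞) (g k : H) :
    E.past g a (E.Gam a (E.eV k)) = E.eV (E.cut a g + E.shift a k) := by
  rw [E.Gam_eV, E.past_eV, E.cut_shift, sub_zero]

theorem adjoint_past_Gam_apply {a : ℝ≥0∞} {Y : 𝓕 →L[ℂ] 𝓕} (hY : E.AdaptedAt Y a) (f g : H) :
    ((E.past f a * E.Gam a)†) (Y (E.eV g)) =
      ⟪E.eV (E.cut a f), Y (E.eV (E.cut a g))⟫ • E.eV (E.shiftL a g) := by
  refine E.ext_inner_eV fun k => ?_
  have hcut : E.cut a (E.cut a f + E.shift a k) = E.cut a f := by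
    rw [map_add, E.cut_cut_of_le le_rfl, E.cut_shift, add_zero]
  rw [ContinuousLinearMap.adjoint_inner_right, mul_apply_eq_comp, past_Gam_eV, hY, hcut,
    add_sub_cancel_left, inner_smul_right, E.inner_eV, E.shiftL_adj, map_sub, E.shiftL_cut,
    sub_zero]

end FockSpec

theorem QST.adaptedAt_meas_Ioc (S : QST E) {c a : ℝ≥0∞} (hca : c ≤ a) (ha : a ≠ ⊤) :
    E.AdaptedAt (S.meas (Set.Ioc c a)) a := by
  have hsplit : S.meas (Set.Iic a) = S.meas (Set.Iic c) + S.meas (Set.Ioc c a) := by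
    rw [← S.meas_union (Set.Iic_disjoint_Ioc le_rfl) measurableSet_Iic measurableSet_Ioc,
      Set.Iic_union_Ioc_eq_Iic hca]
  rw [eq_sub_of_add_eq' hsplit.symm]
  exact (S.adapted a ha).sub ((S.adapted c (ne_top_of_le_ne_top ha hca)).mono hca)

def FockSpec.pAfter (E : FockSpec H 𝓕) (p : H →L[ℂ] H) (a : ℝ≥0∞) : H →L[ℂ] H :=
  E.cut a + p * (1 - E.cut a)

namespace FockSpec

variable {p : H →L[ℂ] H} {a : ℝ≥0∞}

theorem cut_pAfter (hpc : Commute (E.cut a) p) (g : H) :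
    E.cut a (E.pAfter p a g) = E.cut a g := by
  rw [pAfter, ← mul_apply_eq_comp, mul_add, ← mul_assoc, hpc.eq, mul_assoc, mul_sub,
    (E.isStarProjection_cut a).isIdempotentElem.eq, mul_one, sub_self, mul_zero, add_zero]

theorem pAfter_sub_cut (g : H) : E.pAfter p a g - E.cut a g = p (g - E.cut a g) := by
  rw [pAfter, add_apply, add_sub_cancel_left, mul_apply_eq_comp, sub_apply,
    one_apply_eq_self]

theorem isStarProjection_pAfter (hp : IsStarProjection p) (hpc : Commute (E.cut a) p) :
    IsStarProjection (E.pAfter p a) := by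
  have h : E.pAfter p a = 1 - (1 - p) * (1 - E.cut a) := by
    rw [pAfter]; noncomm_ring
  rw [h]
  exact (hp.one_sub.mul (E.isStarProjection_cut a).one_sub
    ((Commute.one_right _).sub_right ((Commute.one_left _).sub_left hpc.symm))).one_sub

theorem AdaptedAt.inner_eV_pAfter {Y : 𝓕 →L[ℂ] 𝓕} (hY : E.AdaptedAt Y a)
    (hp : IsSelfAdjoint p) (hpc : Commute (E.cut a) p) (f g : H) :
    ⟪E.eV f, Y (E.eV (E.pAfter p a g))⟫ = ⟪E.eV (E.pAfter p a f), Y (E.eV g)⟫ := by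
  rw [hY, hY (E.pAfter p a f), E.cut_pAfter hpc, E.cut_pAfter hpc, E.pAfter_sub_cut,
    E.pAfter_sub_cut, hp.inner_apply_left]

end FockSpec

/-- `Q` acts as `I_h ⊗ Γ(T)` on exponential tensors. -/
def IsAmpSecondQuant (E : FockSpec H 𝓕) (A : AmpSpec 𝓕 h 𝓚) (T : H →L[ℂ] H)
    (Q : 𝓚 →L[ℂ] 𝓚) : Prop :=
  ∀ v g, Q (A.tens v (E.eV g)) = A.tens v (E.eV (T g))

namespace IsAmpSecondQuant

variable {A : AmpSpec 𝓕 h 𝓚} {T : H →L[ℂ] H} {Q : 𝓚 →L[ℂ] 𝓚}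

theorem isSelfAdjoint (hQ : IsAmpSecondQuant E A T Q) (hT : IsSelfAdjoint T) :
    IsSelfAdjoint Q := by
  rw [ContinuousLinearMap.isSelfAdjoint_iff']
  refine A.ext_inner_tens_eV_apply E fun u f v g => ?_
  rw [ContinuousLinearMap.adjoint_inner_right, hQ, hQ, A.inner_tens, A.inner_tens, E.inner_eV,
    E.inner_eV, hT.inner_apply_left]

theorem isStarProjection (hQ : IsAmpSecondQuant E A T Q) (hT : IsStarProjection T) :
    IsStarProjection Q where
  isIdempotentElem := A.ext_tens_eV E fun v g => by
    rw [mul_apply_eq_comp, hQ, hQ, ← mul_apply_eq_comp T, hT.isIdempotentElem.eq]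
  isSelfAdjoint := hQ.isSelfAdjoint hT.isSelfAdjoint

theorem commute_amp {p : H →L[ℂ] H} {a : ℝ≥0∞} (hQ : IsAmpSecondQuant E A (E.pAfter p a) Q)
    (hp : IsStarProjection p) (hpc : Commute (E.cut a) p) {Y : 𝓕 →L[ℂ] 𝓕}
    (hY : E.AdaptedAt Y a) : Commute Q (A.amp Y) := by
  refine A.ext_inner_tens_eV_apply E fun u f v g => ?_
  rw [mul_apply_eq_comp, mul_apply_eq_comp, A.amp_tens, hQ, A.amp_tens, A.inner_tens,
    ← (hQ.isSelfAdjoint (E.isStarProjection_pAfter hp hpc).isSelfAdjoint).inner_apply_left, hQ,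
    A.inner_tens, hY.inner_eV_pAfter hp.isSelfAdjoint hpc]

end IsAmpSecondQuant

namespace IsAmpCCRFlow

variable {A : AmpSpec 𝓕 h 𝓚} {Sig : ℝ≥0∞ → (𝓚 →L[ℂ] 𝓚) → 𝓚 →L[ℂ] 𝓚} {a : ℝ≥0∞}

theorem apply_tens_eV (hSig : IsAmpCCRFlow E A Sig) (ha : a ≠ ⊤) (X : 𝓚 →L[ℂ] 𝓚) (v : h)
    (g : H) : Sig a X (A.tens v (E.eV g)) =
      A.amp (E.past g a * E.Gam a) (X (A.tens v (E.eV (E.shiftL a g)))) := by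
  refine A.ext_inner_tens_eV E fun u f => ?_
  have hJ := E.adjoint_past_Gam_apply (E.adaptedAt_one a) g f
  simp only [one_apply_eq_self] at hJ
  rw [hSig a ha, ← ContinuousLinearMap.adjoint_inner_left (A.amp _), A.adjoint_amp, A.amp_tens, hJ,
    map_smul, inner_smul_left, E.inner_eV, ← Complex.exp_conj, inner_conj_symm]

theorem adjoint_apply (hSig : IsAmpCCRFlow E A Sig) (ha : a ≠ ⊤) (X : 𝓚 →L[ℂ] 𝓚) :
    (Sig a X)† = Sig a (X†) := by
  refine A.ext_inner_tens_eV_apply E fun u f v g => ?_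
  rw [ContinuousLinearMap.adjoint_inner_right, ← inner_conj_symm, hSig a ha X v u g f,
    map_mul, ← Complex.exp_conj, inner_conj_symm, inner_conj_symm, hSig a ha _ u v f g,
    ContinuousLinearMap.adjoint_inner_right]

theorem commute_amp (hSig : IsAmpCCRFlow E A Sig) (ha : a ≠ ⊤) {Y : 𝓕 →L[ℂ] 𝓕}
    (hY : IsSelfAdjoint Y) (hYa : E.AdaptedAt Y a) (X : 𝓚 →L[ℂ] 𝓚) :
    Commute (A.amp Y) (Sig a X) := by
  have hYadj : Y† = Y := hY.adjoint_eq
  refine A.ext_inner_tens_eV_apply E fun u f v g => ?_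
  have hlhs : ⟪A.tens u (E.eV f), (A.amp Y * Sig a X) (A.tens v (E.eV g))⟫ =
      ⟪E.eV (E.cut a f), Y (E.eV (E.cut a g))⟫ *
        ⟪A.tens u (E.eV (E.shiftL a f)), X (A.tens v (E.eV (E.shiftL a g)))⟫ := by
    rw [mul_apply_eq_comp, ← ContinuousLinearMap.adjoint_inner_left (A.amp Y), A.adjoint_amp,
      hYadj, A.amp_tens, hSig.apply_tens_eV ha, ← ContinuousLinearMap.adjoint_inner_left (A.amp _),
      A.adjoint_amp, A.amp_tens, E.adjoint_past_Gam_apply hYa, map_smul, inner_smul_left,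
      inner_conj_symm, ← ContinuousLinearMap.adjoint_inner_right Y, hYadj]
  have hrhs : ⟪A.tens u (E.eV f), (Sig a X * A.amp Y) (A.tens v (E.eV g))⟫ =
      ⟪E.eV (E.cut a f), Y (E.eV (E.cut a g))⟫ *
        ⟪A.tens u (E.eV (E.shiftL a f)), X (A.tens v (E.eV (E.shiftL a g)))⟫ := by
    rw [mul_apply_eq_comp, A.amp_tens, ← ContinuousLinearMap.adjoint_inner_left (Sig a X),
      hSig.adjoint_apply ha, hSig.apply_tens_eV ha,
      ← ContinuousLinearMap.adjoint_inner_right (A.amp _),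
      A.adjoint_amp, A.amp_tens, E.adjoint_past_Gam_apply hYa, map_smul, inner_smul_right,
      ContinuousLinearMap.adjoint_inner_left]
  rw [hlhs, hrhs]

end IsAmpCCRFlow

namespace TPartition

variable {t : ℝ≥0∞}

theorem pred_lt (π : TPartition t) {s : ℝ≥0∞} (hs : s ∈ π.pts.erase 0) : π.pred s < s :=
  (Finset.sup_lt_iff (pos_iff_ne_zero.mpr (Finset.ne_of_mem_erase hs))).mpr fun _ hr =>
    (Finset.mem_filter.mp hr).2

theorem le_pred (π : TPartition t) {s r : ℝ≥0∞} (hr : r ∈ π.pts) (hrs : r < s) : r ≤ π.pred s :=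
  Finset.le_sup (f := id) (Finset.mem_filter.mpr ⟨hr, hrs⟩)

theorem disjoint_Ioc_pred (π : TPartition t) {s r : ℝ≥0∞} (hs : s ∈ π.pts) (hr : r ∈ π.pts) (hsr : s ≠ r) :
    Disjoint (Set.Ioc (π.pred s) s) (Set.Ioc (π.pred r) r) := by
  rcases hsr.lt_or_gt with hlt | hlt
  · exact Set.disjoint_left.mpr fun x hxs hxr =>
      (hxs.2.trans (π.le_pred hs hlt)).not_gt hxr.1
  · exact Set.disjoint_left.mpr fun x hxs hxr =>
      (hxr.2.trans (π.le_pred hr hlt)).not_gt hxs.1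

instance : Nonempty (TPartition t) :=
  ⟨⟨{0, t}, by simp, by simp, by simp⟩⟩

instance : IsDirected (TPartition t) (· ≤ ·) :=
  ⟨fun π π' => ⟨⟨π.pts ∪ π'.pts, Finset.mem_union_left _ π.zero_mem,
      Finset.mem_union_left _ π.top_mem, fun s hs => (Finset.mem_union.mp hs).elim
        (π.mem_le s) (π'.mem_le s)⟩,
    Finset.subset_union_left, Finset.subset_union_right⟩⟩

def restrict (u : ℝ≥0∞) (π : TPartition t) : TPartition u where
  pts := insert u (π.pts.filter (· ≤ u))
  zero_mem := Finset.mem_insert_of_mem (Finset.mem_filter.mpr ⟨π.zero_mem, zero_le⟩)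
  top_mem := Finset.mem_insert_self u _
  mem_le _ hs := (Finset.mem_insert.mp hs).elim le_of_eq fun hs => (Finset.mem_filter.mp hs).2

theorem tendsto_restrict {u : ℝ≥0∞} (hut : u ≤ t) :
    Tendsto (restrict u : TPartition t → TPartition u) atTop atTop := by
  refine tendsto_atTop_atTop.mpr fun π₀ => ⟨⟨insert t π₀.pts, Finset.mem_insert_of_mem π₀.zero_mem,
    Finset.mem_insert_self t _, fun s hs => (Finset.mem_insert.mp hs).elim le_of_eq
      fun hs => (π₀.mem_le s hs).trans hut⟩, fun π hπ s hs => ?_⟩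
  exact Finset.mem_insert_of_mem
    (Finset.mem_filter.mpr ⟨hπ (Finset.mem_insert_of_mem hs), π₀.mem_le s hs⟩)

theorem restrict_pts_erase_zero (π : TPartition t) {u : ℝ≥0∞} (hu : u ∈ π.pts) :
    (π.restrict u).pts.erase 0 = (π.pts.erase 0).filter (· ≤ u) := by
  show (insert u (π.pts.filter (· ≤ u))).erase 0 = _
  rw [Finset.insert_eq_of_mem (s := π.pts.filter (· ≤ u)) (Finset.mem_filter.mpr ⟨hu, le_rfl⟩),
    Finset.filter_erase]

theorem pred_restrict (π : TPartition t) {s u : ℝ≥0∞} (hsu : s ≤ u) :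
    (π.restrict u).pred s = π.pred s := by
  simp only [pred, restrict]
  congr 1
  ext r
  simp only [Finset.mem_filter, Finset.mem_insert]
  constructor
  · rintro ⟨rfl | ⟨hr, -⟩, hrs⟩
    · exact absurd hsu (not_le.mpr hrs)
    · exact ⟨hr, hrs⟩
  · rintro ⟨hr, hrs⟩
    exact ⟨Or.inr ⟨hr, hrs.le.trans hsu⟩, hrs⟩

theorem eventually_mem_pts {u : ℝ≥0∞} (hut : u ≤ t) :
    ∀ᶠ π : TPartition t in atTop, u ∈ π.pts :=
  Filter.eventually_atTop.mpr ⟨⟨{0, u, t}, by simp, by simp, by simp [hut]⟩,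
    fun _ hπ => hπ (by simp)⟩

end TPartition

section VSum

variable (A : AmpSpec 𝓕 h 𝓚) (S : QST E) (V : ℝ≥0∞ → 𝓚 →L[ℂ] 𝓚)

theorem VSum_apply {t : ℝ≥0∞} (π : TPartition t) (z : 𝓚) :
    VSum A S V π z = ∑ s ∈ π.pts.erase 0, V s (A.amp (S.meas (Set.Ioc (π.pred s) s)) z) := by
  simp only [VSum, sum_apply]
  rfl

theorem VSum_apply_eq_restrict_add {t u : ℝ≥0∞} (π : TPartition t) (hu : u ∈ π.pts) (z : 𝓚) :
    VSum A S V π z =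
      VSum A S V (π.restrict u) z + VSum A S V π (A.amp (S.meas (Set.Ioc u t)) z) := by
  simp only [VSum_apply, π.restrict_pts_erase_zero hu, Finset.sum_filter, ← Finset.sum_add_distrib]
  refine Finset.sum_congr rfl fun s hs => ?_
  rw [← mul_apply_eq_comp (A.amp _), ← A.amp_mul]
  by_cases hsu : s ≤ u
  · have hdisj : Disjoint (Set.Ioc (π.pred s) s) (Set.Ioc u t) :=
      Set.disjoint_left.mpr fun r hr hr' => (hr.2.trans hsu).not_gt hr'.1
    rw [if_pos hsu, π.pred_restrict hsu, S.meas_mul_meas_of_disjoint hdisj measurableSet_Ioc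
      measurableSet_Ioc, A.amp_zero, zero_apply, map_zero, add_zero]
  · have hsub : Set.Ioc (π.pred s) s ⊆ Set.Ioc u t := fun r hr =>
      ⟨(π.le_pred hu (not_le.mp hsu)).trans_lt hr.1,
        hr.2.trans (π.mem_le s (Finset.mem_of_mem_erase hs))⟩
    rw [if_neg hsu, S.meas_mul_meas measurableSet_Ioc measurableSet_Ioc,
      Set.inter_eq_left.mpr hsub, zero_add]

end VSum

structure IsIsometricPCocycle (E : FockSpec H 𝓕) (A : AmpSpec 𝓕 h 𝓚) (p : H →L[ℂ] H)
    (Sig : ℝ≥0∞ → (𝓚 →L[ℂ] 𝓚) → 𝓚 →L[ℂ] 𝓚) (V Vhat : ℝ≥0∞ → 𝓚 →L[ℂ] 𝓚) : Prop where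
  isStarProjection : IsStarProjection p
  commute_cut : ∀ u, Commute (E.cut u) p
  ccrFlow : IsAmpCCRFlow E A Sig
  pAdapted : PAdapted E A p V
  isHatOf : IsHatOf E A V Vhat
  isometricHat : IsometricHat Vhat
  leftCocycle : IsLeftCocycle Sig V Vhat

namespace IsIsometricPCocycle

variable {A : AmpSpec 𝓕 h 𝓚} {p : H →L[ℂ] H} {Sig : ℝ≥0∞ → (𝓚 →L[ℂ] 𝓚) → 𝓚 →L[ℂ] 𝓚}
  {V Vhat : ℝ≥0∞ → 𝓚 →L[ℂ] 𝓚} {a : ℝ≥0∞}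

theorem inner_hat_apply_hat_apply (hV : IsIsometricPCocycle E A p Sig V Vhat) (ha : a ≠ ⊤)
    (x y : 𝓚) : ⟪Vhat a x, Vhat a y⟫ = ⟪x, y⟫ :=
  LinearIsometry.inner_map_map ⟨(Vhat a : 𝓚 →ₗ[ℂ] 𝓚), hV.isometricHat a ha⟩ x y

theorem apply_tens_eV (hV : IsIsometricPCocycle E A p Sig V Vhat) (ha : a ≠ ⊤) (v : h)
    (g : H) : V a (A.tens v (E.eV g)) = Vhat a (A.tens v (E.eV (E.pAfter p a g))) :=
  A.ext_inner_tens_eV E fun u f => by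
    rw [hV.pAdapted a ha, hV.isHatOf a ha, E.cut_pAfter (hV.commute_cut a), E.pAfter_sub_cut]

theorem exists_eq_hat_mul (hV : IsIsometricPCocycle E A p Sig V Vhat) (ha : a ≠ ⊤) :
    ∃ Q, IsAmpSecondQuant E A (E.pAfter p a) Q ∧ V a = Vhat a * Q := by
  have hQ : IsAmpSecondQuant E A (E.pAfter p a) ((Vhat a)† * V a) := fun v g => by
    refine ext_inner_left ℂ fun x => ?_
    rw [mul_apply_eq_comp, ContinuousLinearMap.adjoint_inner_right, hV.apply_tens_eV ha,
      hV.inner_hat_apply_hat_apply ha]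
  exact ⟨_, hQ, A.ext_tens_eV E fun v g => by rw [mul_apply_eq_comp, hQ, hV.apply_tens_eV ha]⟩

theorem norm_apply_le (hV : IsIsometricPCocycle E A p Sig V Vhat) (ha : a ≠ ⊤) (z : 𝓚) :
    ‖V a z‖ ≤ ‖z‖ := by
  obtain ⟨Q, hQ, hVQ⟩ := hV.exists_eq_hat_mul ha
  rw [hVQ, mul_apply_eq_comp, hV.isometricHat a ha]
  exact (hQ.isStarProjection (E.isStarProjection_pAfter hV.isStarProjection
    (hV.commute_cut a))).norm_apply_le z

/-- With `V_b = V̂_a σ_a(V_{b-a})` and `V_a = V̂_a Q`, the isometry `V̂_a` cancels, and the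
adapted `Y` commutes past `Q` and `σ_a(V_{b-a})` onto `Y'`. -/
theorem inner_apply_amp_eq_zero (hV : IsIsometricPCocycle E A p Sig V Vhat) {b : ℝ≥0∞}
    (hab : a < b) (hb : b ≠ ⊤) {Y Y' : 𝓕 →L[ℂ] 𝓕} (hY : IsSelfAdjoint Y)
    (hYa : E.AdaptedAt Y a) (hYY' : Y * Y' = 0) (x y : 𝓚) :
    ⟪V a (A.amp Y x), V b (A.amp Y' y)⟫ = 0 := by
  have ha : a ≠ ⊤ := hab.ne_top
  obtain ⟨Q, hQ, hVa⟩ := hV.exists_eq_hat_mul ha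
  have hVb : V b = Vhat a * Sig a (V (b - a)) := by
    have := hV.leftCocycle a (b - a) ha (ne_top_of_le_ne_top hb tsub_le_self)
    rwa [add_tsub_cancel_of_le hab.le] at this
  have hQY : Commute Q (A.amp Y) :=
    hQ.commute_amp hV.isStarProjection (hV.commute_cut a) hYa
  have hYSig : Commute (A.amp Y) (Sig a (V (b - a))) :=
    hV.ccrFlow.commute_amp ha hY hYa _
  rw [hVa, hVb, mul_apply_eq_comp, mul_apply_eq_comp, hV.inner_hat_apply_hat_apply ha,
    ← mul_apply_eq_comp Q, hQY.eq, mul_apply_eq_comp, (A.isSelfAdjoint_amp hY).inner_apply_left,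
    ← mul_apply_eq_comp (A.amp Y), hYSig.eq, mul_apply_eq_comp, ← mul_apply_eq_comp (A.amp Y),
    ← A.amp_mul, hYY', A.amp_zero, zero_apply, map_zero, inner_zero_right]

theorem norm_VSum_apply_le (hV : IsIsometricPCocycle E A p Sig V Vhat) (S : QST E) {u : ℝ≥0∞}
    (hu : u ≠ ⊤) (π : TPartition u) (z : 𝓚) : ‖VSum A S V π z‖ ≤ ‖z‖ := by
  set J := π.pts.erase 0
  set P : ℝ≥0∞ → 𝓚 →L[ℂ] 𝓚 := fun s => A.amp (S.meas (Set.Ioc (π.pred s) s))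
  have hne : ∀ s ∈ J, s ≠ ⊤ := fun s hs =>
    ne_top_of_le_ne_top hu (π.mem_le s (Finset.mem_of_mem_erase hs))
  have hPP : ∀ s ∈ J, ∀ r ∈ J, s ≠ r → P s * P r = 0 := fun s hs r hr hsr => by
    rw [← A.amp_mul, S.meas_mul_meas_of_disjoint (π.disjoint_Ioc_pred (Finset.mem_of_mem_erase hs)
      (Finset.mem_of_mem_erase hr) hsr) measurableSet_Ioc measurableSet_Ioc, A.amp_zero]
  have horth : ∀ s ∈ J, ∀ r ∈ J, s < r → ⟪V s (P s z), V r (P r z)⟫ = 0 := fun s hs r hr hsr =>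
    hV.inner_apply_amp_eq_zero hsr (hne r hr) (S.isStarProjection_meas _).isSelfAdjoint
      (S.adaptedAt_meas_Ioc (π.pred_lt hs).le (hne s hs))
      (S.meas_mul_meas_of_disjoint (π.disjoint_Ioc_pred (Finset.mem_of_mem_erase hs)
        (Finset.mem_of_mem_erase hr) hsr.ne) measurableSet_Ioc measurableSet_Ioc) z z
  have hsq : ‖VSum A S V π z‖ ^ 2 ≤ ‖z‖ ^ 2 := by
    calc ‖VSum A S V π z‖ ^ 2 = ∑ s ∈ J, ‖V s (P s z)‖ ^ 2 := by
          rw [VSum_apply]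
          refine norm_sum_sq_eq_sum_norm_sq J _ fun s hs r hr hsr => ?_
          rcases hsr.lt_or_gt with hlt | hlt
          · exact horth s hs r hr hlt
          · rw [← inner_conj_symm, horth r hr s hs hlt, map_zero]
      _ ≤ ∑ s ∈ J, ‖P s z‖ ^ 2 := Finset.sum_le_sum fun s hs =>
          pow_le_pow_left₀ (norm_nonneg _) (hV.norm_apply_le (hne s hs) _) 2
      _ ≤ ‖z‖ ^ 2 := sum_norm_apply_sq_le J P
          (fun s _ => A.isStarProjection_amp (S.isStarProjection_meas _)) hPP z
  exact le_of_pow_le_pow_left₀ two_ne_zero (norm_nonneg z) hsq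

end IsIsometricPCocycle

def IsStoppedCocycle (A : AmpSpec 𝓕 h 𝓚) (S : QST E) (V VSt : ℝ≥0∞ → 𝓚 →L[ℂ] 𝓚) : Prop :=
  ∀ u : ℝ≥0∞, 0 < u → u ≠ ⊤ →
    ∀ z : 𝓚, Tendsto (fun π : TPartition u => VSum A S V π z) atTop (𝓝 (VSt u z))

namespace IsStoppedCocycle

variable {A : AmpSpec 𝓕 h 𝓚} {S : QST E} {V VSt : ℝ≥0∞ → 𝓚 →L[ℂ] 𝓚}

theorem apply_eq_add (hVSt : IsStoppedCocycle A S V VSt) {u u' : ℝ≥0∞} (hu : 0 < u)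
    (huu' : u ≤ u') (hu' : u' ≠ ⊤) (z : 𝓚) :
    VSt u' z = VSt u z + VSt u' (A.amp (S.meas (Set.Ioc u u')) z) := by
  have hu'0 : 0 < u' := hu.trans_le huu'
  have hsplit := ((hVSt u hu (ne_top_of_le_ne_top hu' huu') z).comp
    (TPartition.tendsto_restrict huu')).add (hVSt u' hu'0 hu' (A.amp (S.meas (Set.Ioc u u')) z))
  refine tendsto_nhds_unique (hVSt u' hu'0 hu' z) (hsplit.congr' ?_)
  filter_upwards [TPartition.eventually_mem_pts huu'] with π hπ
  exact (VSum_apply_eq_restrict_add A S V π hπ z).symm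

theorem norm_apply_le (hVSt : IsStoppedCocycle A S V VSt) {p : H →L[ℂ] H}
    {Sig : ℝ≥0∞ → (𝓚 →L[ℂ] 𝓚) → 𝓚 →L[ℂ] 𝓚} {Vhat : ℝ≥0∞ → 𝓚 →L[ℂ] 𝓚}
    (hV : IsIsometricPCocycle E A p Sig V Vhat) {u : ℝ≥0∞} (hu : 0 < u) (hu' : u ≠ ⊤)
    (z : 𝓚) : ‖VSt u z‖ ≤ ‖z‖ :=
  le_of_tendsto (hVSt u hu hu' z).norm (Eventually.of_forall fun π =>
    hV.norm_VSum_apply_le S hu' π z)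

theorem norm_sub_le (hVSt : IsStoppedCocycle A S V VSt) {p : H →L[ℂ] H}
    {Sig : ℝ≥0∞ → (𝓚 →L[ℂ] 𝓚) → 𝓚 →L[ℂ] 𝓚} {Vhat : ℝ≥0∞ → 𝓚 →L[ℂ] 𝓚}
    (hV : IsIsometricPCocycle E A p Sig V Vhat) {r u u' : ℝ≥0∞} (hr : r < u) (huu' : u ≤ u')
    (hu' : u' ≠ ⊤) (z : 𝓚) :
    ‖VSt u' z - VSt u z‖ ≤ ‖A.amp (S.meas (Set.Ioi r)) z‖ := by
  have hu : 0 < u := zero_le.trans_lt hr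
  have hsub : Set.Ioc u u' ⊆ Set.Ioi r := fun s hs => hr.trans hs.1
  have hcell : A.amp (S.meas (Set.Ioc u u')) z =
      A.amp (S.meas (Set.Ioc u u')) (A.amp (S.meas (Set.Ioi r)) z) := by
    rw [← mul_apply_eq_comp, ← A.amp_mul, S.meas_mul_meas measurableSet_Ioc measurableSet_Ioi,
      Set.inter_eq_left.mpr hsub]
  rw [hVSt.apply_eq_add hu huu' hu' z, add_sub_cancel_left, hcell]
  exact (hVSt.norm_apply_le hV (hu.trans_le huu') hu' _).trans
    ((A.isStarProjection_amp (S.isStarProjection_meas _)).norm_apply_le _)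

end IsStoppedCocycle

theorem QST.tendsto_meas_Ioi_apply (S : QST E) (hS : S.Finite) (x : 𝓕) :
    Tendsto (fun n : ℕ => S.meas (Set.Ioi n) x) atTop (𝓝 0) := by
  have hcm : Tendsto (fun n : ℕ => S.cm x x (Set.Ioi n)) atTop (𝓝 0) := by
    have := VectorMeasure.tendsto_vectorMeasure_iInter_atTop_nat (v := S.cm x x)
      (fun m n hmn => Set.Ioi_subset_Ioi (Nat.cast_le.mpr hmn)) fun n => measurableSet_Ioi
    rwa [ENNReal.iInter_Ioi_coe_nat, S.cm_apply _ _ _ (measurableSet_singleton ⊤), hS,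
      zero_apply, inner_zero_right] at this
  have hsq : ∀ n : ℕ, ‖S.meas (Set.Ioi n) x‖ ^ 2 = (S.cm x x (Set.Ioi n)).re := fun n => by
    rw [(S.isStarProjection_meas _).norm_apply_sq, inner_re_symm,
      S.cm_apply _ _ _ measurableSet_Ioi]
    rfl
  have hnorm_sq : Tendsto (fun n : ℕ => ‖S.meas (Set.Ioi n) x‖ ^ 2) atTop (𝓝 0) := by
    have hre := (Complex.continuous_re.tendsto 0).comp hcm
    rw [Complex.zero_re] at hre
    exact hre.congr fun n => (hsq n).symm
  have hnorm := hnorm_sq.sqrt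
  simp only [Real.sqrt_sq (norm_nonneg _), Real.sqrt_zero] at hnorm
  exact tendsto_zero_iff_norm_tendsto_zero.mpr hnorm

theorem tendsto_amp_meas_Ioi_apply (A : AmpSpec 𝓕 h 𝓚) (S : QST E) (hS : S.Finite) (z : 𝓚) :
    Tendsto (fun n : ℕ => A.amp (S.meas (Set.Ioi n)) z) atTop (𝓝 0) := by
  refine tendsto_apply_zero_of_dense_span _
    (fun n => (A.isStarProjection_amp (S.isStarProjection_meas _)).norm_le _) A.dense_tens ?_ z
  rintro _ ⟨u, x, rfl⟩
  refine tendsto_zero_iff_norm_tendsto_zero.mpr ?_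
  simpa [A.amp_tens, A.norm_tens] using (S.tendsto_meas_Ioi_apply hS x).norm.const_mul ‖u‖

instance ENNReal.nhdsLT_top_neBot : (𝓝[<] (⊤ : ℝ≥0∞)).NeBot :=
  nhdsLT_neBot_of_exists_lt ⟨0, ENNReal.zero_lt_top⟩

theorem exists_tendsto_nhdsLT_top_of_norm_sub_le {F : Type*} [NormedAddCommGroup F]
    [CompleteSpace F] (f : ℝ≥0∞ → F) {g : ℕ → ℝ} (hg : Tendsto g atTop (𝓝 0))
    (hfg : ∀ (n : ℕ) (u u' : ℝ≥0∞), n < u → u ≤ u' → u' ≠ ⊤ → ‖f u' - f u‖ ≤ g n) :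
    ∃ L, Tendsto f (𝓝[<] ⊤) (𝓝 L) := by
  refine cauchy_map_iff_exists_tendsto.mp (Metric.cauchy_iff.mpr ⟨inferInstance, fun ε hε => ?_⟩)
  obtain ⟨n, hn⟩ := (hg.eventually (gt_mem_nhds hε)).exists
  refine ⟨f '' Set.Ioo n ⊤, image_mem_map (Ioo_mem_nhdsLT (ENNReal.natCast_lt_top n)), ?_⟩
  rintro _ ⟨u, hu, rfl⟩ _ ⟨u', hu', rfl⟩
  rcases le_total u u' with h | h
  · rw [dist_comm, dist_eq_norm]
    exact (hfg n u u' hu.1 h hu'.2.ne).trans_lt hn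
  · rw [dist_eq_norm]
    exact (hfg n u' u hu'.1 h hu.2.ne).trans_lt hn

theorem stopped_cocycle_at_infinity_exists_general
    (E : FockSpec H 𝓕) (A : AmpSpec 𝓕 h 𝓚) (S : QST E) (hS : S.Finite)
    (pH : H →L[ℂ] H)
    (hpsa : ∀ f g : H, ⟪pH f, g⟫ = ⟪f, pH g⟫) (hpi : pH ∘L pH = pH)
    (hpc : ∀ (u : ℝ≥0∞) (f : H), E.cut u (pH f) = pH (E.cut u f))
    (Sig : ℝ≥0∞ → (𝓚 →L[ℂ] 𝓚) → 𝓚 →L[ℂ] 𝓚) (hSig : IsAmpCCRFlow E A Sig)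
    (V Vhat : ℝ≥0∞ → 𝓚 →L[ℂ] 𝓚)
    (hVp : PAdapted E A pH V) (hhat : IsHatOf E A V Vhat)
    (hiso : IsometricHat Vhat) (hcoc : IsLeftCocycle Sig V Vhat)
    (VSt : ℝ≥0∞ → 𝓚 →L[ℂ] 𝓚)
    (hVSt : ∀ u : ℝ≥0∞, 0 < u → u ≠ ⊤ →
      ∀ z : 𝓚, Tendsto (fun π : TPartition u => VSum A S V π z) atTop (𝓝 (VSt u z))) :
    ∃ VS : 𝓚 →L[ℂ] 𝓚,
      ∀ z : 𝓚, Tendsto (fun u => VSt u z) (𝓝[Set.Iio (⊤ : ℝ≥0∞)] ⊤) (𝓝 (VS z)) := by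
  have hV : IsIsometricPCocycle E A pH Sig V Vhat :=
    { isStarProjection := ⟨hpi, ContinuousLinearMap.isSelfAdjoint_iff_isSymmetric.mpr hpsa⟩
      commute_cut := fun u => ContinuousLinearMap.ext (hpc u)
      ccrFlow := hSig
      pAdapted := hVp
      isHatOf := hhat
      isometricHat := hiso
      leftCocycle := hcoc }
  have hlim : ∀ z, ∃ L, Tendsto (fun u => VSt u z) (𝓝[<] ⊤) (𝓝 L) := fun z =>
    exists_tendsto_nhdsLT_top_of_norm_sub_le _
      (by simpa using (tendsto_amp_meas_Ioi_apply A S hS z).norm)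
      fun n u u' hn huu' hu' => IsStoppedCocycle.norm_sub_le hVSt hV hn huu' hu' z
  choose L hL using hlim
  exact ⟨continuousLinearMapOfTendsto VSt (tendsto_pi_nhds.mpr hL), hL⟩

/-- Corollary: for a strongly continuous isometric `p`-adapted
cocycle `V`, the strong limit `V_S = V_{S,∞} = lim_{t→∞} V_{S,t}` exists. -/
theorem stopped_cocycle_at_infinity_exists
    (E : FockSpec H 𝓕) (A : AmpSpec 𝓕 h 𝓚) (S : QST E) (hS : S.Finite)
    (M : Set (h →L[ℂ] h)) (pH : H →L[ℂ] H)
    (hpsa : ∀ f g : H, ⟪pH f, g⟫ = ⟪f, pH g⟫) (hpi : pH ∘L pH = pH)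
    (hpc : ∀ (u : ℝ≥0∞) (f : H), E.cut u (pH f) = pH (E.cut u f))
    (Sig : ℝ≥0∞ → (𝓚 →L[ℂ] 𝓚) → 𝓚 →L[ℂ] 𝓚) (hSig : IsAmpCCRFlow E A Sig)
    (V Vhat : ℝ≥0∞ → 𝓚 →L[ℂ] 𝓚)
    (hVM : ∀ u : ℝ≥0∞, InVNTensor A M (V u))
    (hVp : PAdapted E A pH V) (hhat : IsHatOf E A V Vhat)
    (hiso : IsometricHat Vhat) (hcoc : IsLeftCocycle Sig V Vhat)
    (hcont : StrongContOn V)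
    (VSt : ℝ≥0∞ → 𝓚 →L[ℂ] 𝓚)
    (hVSt : ∀ u : ℝ≥0∞, 0 < u → u ≠ ⊤ →
      ∀ z : 𝓚, Tendsto (fun π : TPartition u => VSum A S V π z) atTop (𝓝 (VSt u z))) :
    ∃ VS : 𝓚 →L[ℂ] 𝓚,
      ∀ z : 𝓚, Tendsto (fun u => VSt u z) (𝓝[Set.Iio (⊤ : ℝ≥0∞)] ⊤) (𝓝 (VS z)) :=
  stopped_cocycle_at_infinity_exists_general E A S hS pH hpsa hpi hpc Sig hSig V Vhat hVp hhat hiso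
    hcoc VSt hVSt

end
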